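/- Let A be an atomic set partition of [n] (n ≥ 1) with r blocks. Then the element p(A) := ∑_{γ ∈ Γ'(r)} (−1)^{ℓ(γ)−1} γ[A] of NCSym is nonzero. -/

import Mathlib

open Finset

/-- `[n] = {1, …, n}` as a finset of naturals. -/
def seg (n : ℕ) : Finset ℕ := Finset.Icc 1 n

/-- A (raw) collection of blocks. -/
abbrev Blocks := Finset (Finset ℕ)

/-- The ground set (union of the blocks). -/
def ground (A : Blocks) : Finset ℕ := A.sup id

/-- `A` is a set partition of the finite set `X`: nonempty pairwise disjoint blocks with union `X`. -/
def IsPartitionOf (A : Blocks) (X : Finset ℕ) : Prop :=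
  (∀ B ∈ A, B.Nonempty) ∧ (A : Set (Finset ℕ)).PairwiseDisjoint id ∧ ground A = X

/-- `A` is a set partition of `[n]`. -/
def IsSP (A : Blocks) (n : ℕ) : Prop := IsPartitionOf A (seg n)

/-- The unique increasing bijection from `X` onto `[#X]`. -/
def stdFun (X : Finset ℕ) (x : ℕ) : ℕ := (X.filter (· < x)).card + 1

/-- Standardization of a collection of blocks. -/
def stdP (A : Blocks) : Blocks := A.image fun B => B.image (stdFun (ground A))

/-- Shift all entries of all blocks up by `k`. -/
def shiftP (A : Blocks) (k : ℕ) : Blocks := A.image fun B => B.image (· + k)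

/-- Concatenation `A | B` of set partitions: shift `B` up by the weight of `A`. -/
def concatP (A B : Blocks) : Blocks := A ∪ shiftP B (ground A).card

/-- The `i`-th block of `A` (1-based), where blocks are ordered by increasing minima. -/
def blockAt (A : Blocks) (i : ℕ) : Finset ℕ :=
  (A.filter fun B => (A.filter fun C => C.min ≤ B.min).card = i).sup id

/-- `A_J` : the subcollection of blocks of `A` indexed by `J`. -/
def subColl (A : Blocks) (J : Finset ℕ) : Blocks := J.image (blockAt A)

/-- `A` is an atomic set partition of `[n]`. -/
def IsAtomicSP (A : Blocks) (n : ℕ) : Prop :=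
  IsSP A n ∧ 1 ≤ n ∧
    ¬ ∃ m B C, 0 < m ∧ m < n ∧ IsSP B m ∧ IsSP C (n - m) ∧ A = concatP B C

/-- Raw set compositions: words whose letters are finsets of naturals. -/
abbrev SComp := List (Finset ℕ)

/-- The union of the letters of a word. -/
def sunion (γ : SComp) : Finset ℕ := γ.foldr (· ∪ ·) ∅

/-- `γ` is a set composition of `K`. -/
def IsSCompOf (γ : SComp) (K : Finset ℕ) : Prop :=
  (∀ B ∈ γ, B.Nonempty) ∧ γ.Pairwise Disjoint ∧ sunion γ = K

/-- `γ[A] = std(A_{γ₁}) | std(A_{γ₂}) | ⋯ | std(A_{γₛ})`. -/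
def applyComp (γ : SComp) (A : Blocks) : Blocks :=
  (γ.map fun g => stdP (subColl A g)).foldr concatP ∅

abbrev NCSym := Blocks →₀ ℚ

/-- The basis element of `NCSym` indexed by a set partition. -/
noncomputable def bas (A : Blocks) : NCSym := Finsupp.single A 1

/-- `p(A) = ∑_{γ ∈ Γ'(r)} (-1)^{ℓ(γ)-1} γ[A]`. -/
noncomputable def pNC (A : Blocks) (r : ℕ) : NCSym :=
  ∑ᶠ γ ∈ {γ : SComp | IsSCompOf γ (seg r) ∧ 1 ∈ γ.headI},
    ((-1 : ℚ) ^ (γ.length - 1)) • bas (applyComp γ A)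

open TensorProduct in
/-- `Δ(A) = ∑_{K ⊔ L = [r]} std(A_K) ⊗ std(A_L)` on a basis element. -/
noncomputable def deltaB (A : Blocks) : NCSym ⊗[ℚ] NCSym :=
  ∑ K ∈ (seg A.card).powerset,
    bas (stdP (subColl A K)) ⊗ₜ[ℚ] bas (stdP (subColl A (seg A.card \ K)))

/-- The coproduct of `NCSym`, extended linearly. -/
noncomputable def Delta : NCSym →ₗ[ℚ] TensorProduct ℚ NCSym NCSym :=
  Finsupp.lsum ℚ fun A => LinearMap.toSpanSingleton ℚ _ (deltaB A)

/-!
The coefficient of `A` in `p(A)` is `1`. The one-letter composition `([r])` contributes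
`std(A) = A`. Every other `γ ∈ Γ'(r)` has at least two letters, so `γ[A]` is the concatenation
`std(A_{γ₁}) | (γ₂, …, γₛ)[A]` of two nonempty set partitions, and it cannot be the atomic `A`.
-/

lemma mem_seg {n x : ℕ} : x ∈ seg n ↔ 1 ≤ x ∧ x ≤ n := mem_Icc

lemma card_seg (n : ℕ) : #(seg n) = n := by simp [seg]

lemma mem_ground {A : Blocks} {x : ℕ} : x ∈ ground A ↔ ∃ B ∈ A, x ∈ B := by
  simp [ground, mem_sup]

lemma ground_image_image (A : Blocks) (f : ℕ → ℕ) :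
    ground (A.image fun B => B.image f) = (ground A).image f := by
  ext x
  simp only [mem_ground, mem_image]
  grind

section Partitions

variable {A B C : Blocks} {X Y : Finset ℕ} {m n k : ℕ}

lemma IsPartitionOf.image (h : IsPartitionOf A X) {f : ℕ → ℕ} (hf : Set.InjOn f X) :
    IsPartitionOf (A.image fun B => B.image f) (X.image f) := by
  obtain ⟨hne, hdisj, rfl⟩ := h
  refine ⟨?_, ?_, ground_image_image A f⟩
  · simp only [mem_image, forall_exists_index, and_imp]
    rintro _ B hB rfl
    exact (hne B hB).image f
  · simp only [coe_image]
    rintro _ ⟨B, hB, rfl⟩ _ ⟨C, hC, rfl⟩ hBC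
    have hBC' : B ≠ C := fun h => hBC (h ▸ rfl)
    refine disjoint_left.mpr fun x hxB hxC => ?_
    obtain ⟨b, hb, rfl⟩ := mem_image.mp hxB
    obtain ⟨c, hc, hcb⟩ := mem_image.mp hxC
    have hbc : c = b :=
      hf (mem_ground.mpr ⟨C, hC, hc⟩) (mem_ground.mpr ⟨B, hB, hb⟩) hcb
    exact disjoint_left.mp (hdisj hB hC hBC') hb (hbc ▸ hc)

lemma IsPartitionOf.union (hA : IsPartitionOf A X) (hB : IsPartitionOf B Y)
    (hXY : Disjoint X Y) : IsPartitionOf (A ∪ B) (X ∪ Y) := by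
  refine ⟨fun D hD => (mem_union.mp hD).elim (hA.1 D) (hB.1 D), ?_, ?_⟩
  · rw [coe_union, Set.pairwiseDisjoint_union]
    refine ⟨hA.2.1, hB.2.1, fun D hD E hE _ => hXY.mono ?_ ?_⟩
    · exact hA.2.2 ▸ le_sup (f := id) hD
    · exact hB.2.2 ▸ le_sup (f := id) hE
  · rw [ground, sup_union]
    exact congrArg₂ (· ⊔ ·) hA.2.2 hB.2.2

lemma IsPartitionOf.of_subset (h : IsPartitionOf A X) (hBA : B ⊆ A) :
    IsPartitionOf B (ground B) :=
  ⟨fun D hD => h.1 D (hBA hD), h.2.1.subset (by simpa using hBA), rfl⟩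

lemma IsSP.pos (h : IsSP A n) (hA : A.Nonempty) : 0 < n := by
  obtain ⟨B, hB⟩ := hA
  obtain ⟨x, hx⟩ := h.1 B hB
  have := mem_seg.mp (h.2.2 ▸ mem_ground.mpr ⟨B, hB, hx⟩)
  omega

lemma IsSP.nonempty (h : IsSP A n) (hn : 0 < n) : A.Nonempty := by
  obtain ⟨B, hB, -⟩ := mem_ground.mp (h.2.2 ▸ mem_seg.mpr ⟨le_rfl, hn⟩ : 1 ∈ ground A)
  exact ⟨B, hB⟩

lemma IsSP.unique (h : IsSP A n) (h' : IsSP A m) : n = m := by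
  simpa only [card_seg] using congrArg card (h.2.2.symm.trans h'.2.2)

end Partitions

section Standardization

lemma stdFun_lt_stdFun {X : Finset ℕ} {x y : ℕ} (hx : x ∈ X) (hxy : x < y) :
    stdFun X x < stdFun X y := by
  have : X.filter (· < x) ⊂ X.filter (· < y) :=
    (ssubset_iff_of_subset (monotone_filter_right X fun _ _ hz => hz.trans hxy)).mpr
      ⟨x, mem_filter.mpr ⟨hx, hxy⟩, by simp⟩
  unfold stdFun
  exact Nat.succ_lt_succ (card_lt_card this)

lemma stdFun_injOn (X : Finset ℕ) : Set.InjOn (stdFun X) X :=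
  StrictMonoOn.injOn fun _ hx _ _ hxy => stdFun_lt_stdFun hx hxy

lemma image_stdFun (X : Finset ℕ) : X.image (stdFun X) = seg #X := by
  refine eq_of_subset_of_card_le (fun a ha => ?_) ?_
  · obtain ⟨x, hx, rfl⟩ := mem_image.mp ha
    have : #(X.filter (· < x)) < #X := card_lt_card (filter_ssubset.mpr ⟨x, hx, lt_irrefl x⟩)
    exact mem_seg.mpr ⟨Nat.le_add_left 1 _, this⟩
  · rw [card_seg, card_image_of_injOn (stdFun_injOn X)]

lemma stdFun_seg {n x : ℕ} (hx : x ∈ seg n) : stdFun (seg n) x = x := by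
  have hx' := mem_seg.mp hx
  have : (seg n).filter (· < x) = Ico 1 x := by
    ext y
    simp only [seg, mem_filter, mem_Icc, mem_Ico]
    omega
  simp only [stdFun, this, Nat.card_Ico]
  omega

lemma IsPartitionOf.isSP_stdP {A : Blocks} {X : Finset ℕ} (h : IsPartitionOf A X) :
    IsSP (stdP A) #X := by
  obtain rfl := h.2.2
  rw [IsSP, ← image_stdFun]
  exact h.image (stdFun_injOn _)

lemma IsSP.stdP_eq_self {A : Blocks} {n : ℕ} (h : IsSP A n) : stdP A = A := by
  have hB : ∀ B ∈ A, B.image (stdFun (ground A)) = B := fun B hB => by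
    rw [h.2.2, image_congr fun x hx => stdFun_seg (h.2.2 ▸ mem_ground.mpr ⟨B, hB, hx⟩),
      image_id']
  rw [stdP, image_congr hB, image_id']

end Standardization

section Concatenation

variable {B C : Blocks} {m k : ℕ}

lemma concatP_empty (B : Blocks) : concatP B ∅ = B := by
  simp [concatP, shiftP]

lemma IsSP.concatP (hB : IsSP B m) (hC : IsSP C k) : IsSP (concatP B C) (m + k) := by
  have hshift := hC.image (add_left_injective m).injOn
  show IsSP (B ∪ shiftP C #(ground B)) _
  rw [hB.2.2, card_seg]
  have hseg : seg m ∪ (seg k).image (· + m) = seg (m + k) := by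
    ext x
    simp only [mem_union, mem_image, mem_seg]
    constructor
    · rintro (h | ⟨y, hy, rfl⟩) <;> omega
    · intro hx
      by_cases hxm : x ≤ m
      · exact Or.inl ⟨hx.1, hxm⟩
      · exact Or.inr ⟨x - m, by omega, by omega⟩
  have hdisj : Disjoint (seg m) ((seg k).image (· + m)) := by
    simp only [disjoint_left, mem_image, mem_seg]
    omega
  rw [IsSP, ← hseg]
  exact hB.union hshift hdisj

end Concatenation

section BlockRank

def blockRank (A : Blocks) (B : Finset ℕ) : ℕ := #(A.filter fun C => C.min ≤ B.min)

variable {A : Blocks} {X : Finset ℕ}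

lemma blockRank_lt_blockRank {B C : Finset ℕ} (hC : C ∈ A) (h : B.min < C.min) :
    blockRank A B < blockRank A C :=
  card_lt_card <|
    (ssubset_iff_of_subset (monotone_filter_right A fun _ _ hD => hD.trans h.le)).mpr
      ⟨C, mem_filter.mpr ⟨hC, le_rfl⟩, fun hC' => (mem_filter.mp hC').2.not_gt h⟩

lemma IsPartitionOf.min_injOn (h : IsPartitionOf A X) :
    Set.InjOn Finset.min (A : Set (Finset ℕ)) := by
  intro B hB C hC hmin
  by_contra hBC
  obtain ⟨b, hb⟩ := min_of_nonempty (h.1 B hB)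
  exact disjoint_left.mp (h.2.1 hB hC hBC) (mem_of_min hb) (mem_of_min (hmin ▸ hb))

lemma IsPartitionOf.blockRank_injOn (h : IsPartitionOf A X) :
    Set.InjOn (blockRank A) (A : Set (Finset ℕ)) := by
  intro B hB C hC hBC
  rcases lt_trichotomy B.min C.min with hlt | heq | hgt
  · exact absurd hBC (blockRank_lt_blockRank hC hlt).ne
  · exact h.min_injOn hB hC heq
  · exact absurd hBC (blockRank_lt_blockRank hB hgt).ne'

lemma IsPartitionOf.image_blockRank (h : IsPartitionOf A X) :
    A.image (blockRank A) = seg #A := by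
  refine eq_of_subset_of_card_le (fun i hi => ?_) ?_
  · obtain ⟨B, hB, rfl⟩ := mem_image.mp hi
    exact mem_seg.mpr ⟨card_pos.mpr ⟨B, mem_filter.mpr ⟨hB, le_rfl⟩⟩, card_filter_le _ _⟩
  · rw [card_seg, card_image_of_injOn h.blockRank_injOn]

lemma IsPartitionOf.blockAt_blockRank (h : IsPartitionOf A X) {B : Finset ℕ} (hB : B ∈ A) :
    blockAt A (blockRank A B) = B := by
  have : A.filter (fun C => blockRank A C = blockRank A B) = {B} := by
    ext C
    simp only [mem_filter, mem_singleton]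
    refine ⟨fun hC => h.blockRank_injOn hC.1 hB hC.2, ?_⟩
    rintro rfl
    exact ⟨hB, rfl⟩
  exact (congrArg (sup · id) this).trans (sup_singleton ..)

lemma IsPartitionOf.subColl_seg_card (h : IsPartitionOf A X) : subColl A (seg #A) = A := by
  rw [subColl, ← h.image_blockRank, image_image]
  exact (image_congr fun B hB => h.blockAt_blockRank hB).trans image_id

lemma IsPartitionOf.subColl_subset (h : IsPartitionOf A X) {J : Finset ℕ} (hJ : J ⊆ seg #A) :
    subColl A J ⊆ A :=
  (image_subset_image hJ).trans h.subColl_seg_card.subset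

end BlockRank

section Compositions

def Γ' (r : ℕ) : Set SComp := {γ | IsSCompOf γ (seg r) ∧ 1 ∈ γ.headI}

lemma sunion_cons (g : Finset ℕ) (γ : SComp) : sunion (g :: γ) = g ∪ sunion γ := rfl

lemma mem_sunion {x : ℕ} {γ : SComp} : x ∈ sunion γ ↔ ∃ g ∈ γ, x ∈ g := by
  induction γ with
  | nil => simp [sunion]
  | cons g γ ih => simp [sunion_cons, ih]

lemma subset_sunion {g : Finset ℕ} {γ : SComp} (hg : g ∈ γ) : g ⊆ sunion γ :=
  fun _ hx => mem_sunion.mpr ⟨g, hg, hx⟩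

lemma length_le_card_sunion {γ : SComp} (hne : ∀ g ∈ γ, g.Nonempty)
    (hd : γ.Pairwise Disjoint) : γ.length ≤ #(sunion γ) := by
  induction γ with
  | nil => simp
  | cons g γ ih =>
    obtain ⟨hg, hγ⟩ := List.pairwise_cons.mp hd
    have hdisj : Disjoint g (sunion γ) := disjoint_left.mpr fun x hxg hxγ => by
      obtain ⟨g', hg', hxg'⟩ := mem_sunion.mp hxγ
      exact disjoint_left.mp (hg g' hg') hxg hxg'
    rw [List.length_cons, sunion_cons, card_union_of_disjoint hdisj]
    have := card_pos.mpr (hne g List.mem_cons_self)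
    have := ih (fun x hx => hne x (List.mem_cons_of_mem g hx)) hγ
    omega

lemma finite_Γ' (r : ℕ) : (Γ' r).Finite := by
  -- an element of `Γ' r` is a list of at most `r` subsets of `[r]`
  refine ((List.finite_length_le _ r).image
    (List.map (Subtype.val (p := (· ∈ (seg r).powerset))))).subset ?_
  rintro γ ⟨⟨hne, hd, hun⟩, -⟩
  refine ⟨γ.attach.map fun g => ⟨g.1, mem_powerset.mpr (hun ▸ subset_sunion g.2)⟩, ?_, by simp⟩
  simpa [hun, card_seg] using length_le_card_sunion hne hd

variable {A : Blocks} {n : ℕ}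

lemma applyComp_singleton_seg (h : IsSP A n) : applyComp [seg #A] A = A := by
  rw [applyComp, List.map_singleton, List.foldr_cons, List.foldr_nil, concatP_empty,
    h.subColl_seg_card, h.stdP_eq_self]

lemma IsSP.exists_isSP_applyComp (h : IsSP A n) {γ : SComp} (hγ : ∀ g ∈ γ, g ⊆ seg #A) :
    ∃ k, IsSP (applyComp γ A) k := by
  induction γ with
  | nil => exact ⟨0, by simp [IsSP, IsPartitionOf, applyComp, ground, seg]⟩
  | cons g γ ih =>
    obtain ⟨k, hk⟩ := ih fun g' hg' => hγ g' (List.mem_cons_of_mem g hg')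
    exact ⟨_, ((h.of_subset (h.subColl_subset (hγ g List.mem_cons_self))).isSP_stdP).concatP hk⟩

lemma applyComp_cons_nonempty {g : Finset ℕ} (hg : g.Nonempty) (γ : SComp) :
    (applyComp (g :: γ) A).Nonempty :=
  (hg.image _).image _ |>.mono subset_union_left

end Compositions

section Atomic

variable {A : Blocks} {n : ℕ}

lemma IsAtomicSP.ne_concatP (hA : IsAtomicSP A n) {B C : Blocks} {m k : ℕ} (hB : IsSP B m)
    (hC : IsSP C k) (hBne : B.Nonempty) (hCne : C.Nonempty) : A ≠ concatP B C := by
  rintro rfl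
  have hn : n = m + k := hA.1.unique (hB.concatP hC)
  have hm := hB.pos hBne
  have hk := hC.pos hCne
  exact hA.2.2 ⟨m, B, C, hm, by omega, hB, by rwa [hn, Nat.add_sub_cancel_left], rfl⟩

lemma IsAtomicSP.applyComp_ne_self (hA : IsAtomicSP A n) {γ : SComp} (hγ : γ ∈ Γ' #A)
    (hne : γ ≠ [seg #A]) : applyComp γ A ≠ A := by
  obtain ⟨⟨hγne, -, hun⟩, h1⟩ := hγ
  have hsub : ∀ g ∈ γ, g ⊆ seg #A := fun g hg => hun ▸ subset_sunion hg
  match γ with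
  | [] => exact (notMem_empty 1 h1).elim
  | [g] =>
    rw [sunion_cons, sunion, List.foldr_nil, union_empty] at hun
    exact absurd (congrArg ([·]) hun) hne
  | g :: g' :: γ' =>
    obtain ⟨k, hk⟩ :=
      hA.1.exists_isSP_applyComp fun x hx => hsub x (List.mem_cons_of_mem g hx)
    have hg := hsub g List.mem_cons_self
    exact (hA.ne_concatP (hA.1.of_subset (hA.1.subColl_subset hg)).isSP_stdP hk
      (((hγne g List.mem_cons_self).image _).image _)
      (applyComp_cons_nonempty (hγne g' (by simp)) γ')).symm

lemma IsAtomicSP.pNC_apply_self (hA : IsAtomicSP A n) : pNC A #A A = 1 := by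
  have hseg : [seg #A] ∈ Γ' #A := by
    have h1 : 1 ∈ seg #A := mem_seg.mpr ⟨le_rfl, card_pos.mpr (hA.1.nonempty hA.2.1)⟩
    exact ⟨⟨by simpa using ⟨1, h1⟩, by simp, by simp [sunion]⟩, h1⟩
  change (∑ᶠ γ ∈ Γ' #A, ((-1 : ℚ) ^ (γ.length - 1)) • bas (applyComp γ A)) A = 1
  rw [finsum_mem_eq_finite_toFinset_sum _ (finite_Γ' _), Finsupp.finsetSum_apply,
    sum_eq_single_of_mem _ ((finite_Γ' _).mem_toFinset.mpr hseg)]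
  · simp [bas, applyComp_singleton_seg hA.1]
  · intro γ hγ hne
    simp [bas, hA.applyComp_ne_self ((finite_Γ' _).mem_toFinset.mp hγ) hne]

end Atomic

theorem ncsym_pA_ne_zero_general (n r : ℕ) (A : Blocks) (hr : A.card = r) (hatom : IsAtomicSP A n) :
    pNC A r ≠ 0 := by
  subst hr
  intro h
  simpa [h] using hatom.pNC_apply_self

/-- If `A` is an atomic set partition of `[n]` (`n ≥ 1`) with `r` blocks, then
`p(A) = ∑_{γ ∈ Γ'(r)} (-1)^{ℓ(γ)-1} γ[A]` is a nonzero element of `NCSym`. -/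
theorem ncsym_pA_ne_zero (n r : ℕ) (hn : 1 ≤ n) (A : Blocks)
    (hA : IsSP A n) (hr : A.card = r) (hatom : IsAtomicSP A n) :
    pNC A r ≠ 0 :=
  ncsym_pA_ne_zero_general n r A hr hatom
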